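/- arXiv:2008.12600 — 4 statements merged into one kernel-verified Lean document; each statement's English description precedes it below -/
import Mathlib

section
/- For every real β > 0 and every x ∈ (0,1), the SL(2,ℝ) collinear block k_β satisfies the collinear (SL(2,ℝ) Casimir) differential equation (1−x)·x²·k_β''(x) − x²·k_β'(x) = β(β−1)·k_β(x). -/
open Real

/-- Pochhammer symbol `(a)_n = a (a+1) ⋯ (a+n-1)`. -/
noncomputable def poch (a : ℝ) (n : ℕ) : ℝ := (ascPochhammer ℝ n).eval a

/-- Gauss hypergeometric series `₂F₁(a,b;c;x)`. -/
noncomputable def F21 (a b c x : ℝ) : ℝ :=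
  ∑' n : ℕ, poch a n * poch b n / (poch c n * (n.factorial : ℝ)) * x ^ n

/-- The SL(2,ℝ) collinear conformal block `k_β(x) = x^β ₂F₁(β,β;2β;x)`. -/
noncomputable def kblock (β x : ℝ) : ℝ := x ^ β * F21 β β (2 * β) x

/-!
Writing `θ = x d/dx`, the Casimir operator is `(1 - x) θ (θ - 1) - x θ`, and conjugating by `x^β`
shifts `θ` to `θ + β`. The Casimir equation for `k_β = x^β F` thus becomes
`θ (θ + 2β - 1) F = x (θ + β)² F`, which is Gauss's hypergeometric equation for
`F = ₂F₁(β, β; 2β; x)`; on power series it is the two-term recurrence of the coefficients.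
-/

open FormalMultilinearSeries Topology
open scoped Nat

section PowerSeries

variable {𝕜 : Type*} [NontriviallyNormedField 𝕜] {f : 𝕜 → 𝕜} {c : ℕ → 𝕜} {r : ENNReal} {y : 𝕜}

theorem HasFPowerSeriesOnBall.hasSum_ofScalars (h : HasFPowerSeriesOnBall f (ofScalars 𝕜 c) 0 r)
    (hy : y ∈ Metric.eball 0 r) : HasSum (fun n => c n * y ^ n) (f y) := by
  simpa [ofScalars_apply_eq, mul_comm] using h.hasSum hy

variable [CompleteSpace 𝕜]

theorem HasFPowerSeriesOnBall.deriv_ofScalars (h : HasFPowerSeriesOnBall f (ofScalars 𝕜 c) 0 r) :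
    HasFPowerSeriesOnBall (deriv f) (ofScalars 𝕜 fun n => (n + 1) * c (n + 1)) 0 r := by
  convert (ContinuousLinearMap.apply 𝕜 𝕜 (1 : 𝕜)).comp_hasFPowerSeriesOnBall h.fderiv using 1
  · ext y
    simp only [Function.comp_apply, ContinuousLinearMap.apply_apply, fderiv_eq_smul_deriv,
      smul_eq_mul, one_mul]
  · ext n
    simp [coeff_ofScalars]

theorem HasFPowerSeriesOnBall.hasSum_mul_deriv (h : HasFPowerSeriesOnBall f (ofScalars 𝕜 c) 0 r)
    (hy : y ∈ Metric.eball 0 r) : HasSum (fun n => n * c n * y ^ n) (y * deriv f y) := by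
  refine (hasSum_nat_add_iff' 1).mp ?_
  simpa [pow_succ, mul_comm, mul_left_comm, mul_assoc] using
    (h.deriv_ofScalars.hasSum_ofScalars hy).mul_left y

theorem HasFPowerSeriesOnBall.hasSum_sq_mul_deriv_deriv
    (h : HasFPowerSeriesOnBall f (ofScalars 𝕜 c) 0 r) (hy : y ∈ Metric.eball 0 r) :
    HasSum (fun n => n * (n - 1) * c n * y ^ n) (y ^ 2 * deriv (deriv f) y) := by
  refine (hasSum_nat_add_iff' 1).mp ?_
  simp only [Finset.range_one, Finset.sum_singleton, Nat.cast_zero, zero_mul, sub_zero, sq,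
    mul_assoc]
  exact ((h.deriv_ofScalars.hasSum_mul_deriv hy).mul_left y).congr_fun fun n => by
    push_cast; ring

end PowerSeries

section Hypergeometric

variable {𝕂 : Type*} [RCLike 𝕂] {a b c : 𝕂}

theorem ordinaryHypergeometricCoefficient_succ (hc : ∀ k : ℕ, (k : 𝕂) ≠ -c) (n : ℕ) :
    (n + 1) * (n + c) * ordinaryHypergeometricCoefficient a b c (n + 1)
      = (n + a) * (n + b) * ordinaryHypergeometricCoefficient a b c n := by
  have hcn : (ascPochhammer 𝕂 n).eval c ≠ 0 := by simpa using fun k _ => hc k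
  have hcn' : c + n ≠ 0 := fun h => hc n (eq_neg_of_add_eq_zero_right h)
  have hfac : (n ! : 𝕂) ≠ 0 := Nat.cast_ne_zero.2 (Nat.factorial_ne_zero n)
  simp only [ordinaryHypergeometricCoefficient, ascPochhammer_succ_eval, Nat.factorial_succ]
  push_cast
  field_simp
  ring

variable (habc : ∀ kn : ℕ, ↑kn ≠ -a ∧ ↑kn ≠ -b ∧ ↑kn ≠ -c)
include habc

theorem hasFPowerSeriesOnBall_ordinaryHypergeometric :
    HasFPowerSeriesOnBall (₂F₁ a b c) (ordinaryHypergeometricSeries 𝕂 a b c) 0 1 := by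
  have h := ordinaryHypergeometricSeries_radius_eq_one (𝔸 := 𝕂) a b c habc
  rw [← h]
  exact (ordinaryHypergeometricSeries 𝕂 a b c).hasFPowerSeriesOnBall (h ▸ zero_lt_one)

theorem analyticAt_ordinaryHypergeometric {y : 𝕂} (hy : ‖y‖ < 1) : AnalyticAt 𝕂 (₂F₁ a b c) y :=
  (hasFPowerSeriesOnBall_ordinaryHypergeometric habc).analyticAt_of_mem <| by
    rwa [mem_eball_zero_iff, ← ofReal_norm, ENNReal.ofReal_lt_one]

theorem ordinaryHypergeometric_euler_ode {y : 𝕂} (hy : ‖y‖ < 1) :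
    y ^ 2 * deriv (deriv (₂F₁ a b c)) y + c * (y * deriv (₂F₁ a b c) y)
      = y * (y ^ 2 * deriv (deriv (₂F₁ a b c)) y + (a + b + 1) * (y * deriv (₂F₁ a b c) y)
        + a * b * ₂F₁ a b c y) := by
  have hF := hasFPowerSeriesOnBall_ordinaryHypergeometric habc
  have hy' : y ∈ Metric.eball 0 1 := by
    rwa [mem_eball_zero_iff, ← ofReal_norm, ENNReal.ofReal_lt_one]
  have h0 := hF.hasSum_ofScalars hy'
  have h1 := hF.hasSum_mul_deriv hy'
  have h2 := hF.hasSum_sq_mul_deriv_deriv hy'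
  have hlhs := (hasSum_nat_add_iff' 1).mpr (h2.add (h1.mul_left c))
  have hrhs := ((h2.add (h1.mul_left (a + b + 1))).add (h0.mul_left (a * b))).mul_left y
  simp only [Finset.range_one, Finset.sum_singleton, Nat.cast_zero, zero_mul, mul_zero,
    add_zero, sub_zero] at hlhs
  refine hlhs.unique (hrhs.congr_fun fun n => ?_)
  have hrec := ordinaryHypergeometricCoefficient_succ (a := a) (b := b) (fun k => (habc k).2.2) n
  push_cast
  linear_combination y ^ (n + 1) * hrec

end Hypergeometric

theorem F21_eq_ordinaryHypergeometric (a b c x : ℝ) : F21 a b c x = ₂F₁ a b c x := by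
  rw [F21, ordinaryHypergeometric_eq_tsum]
  refine tsum_congr fun n => ?_
  simp only [poch, smul_eq_mul]
  ring

section RpowConjugation

variable {f : ℝ → ℝ} {x : ℝ}

theorem hasDerivAt_rpow_mul (β : ℝ) (hx : 0 < x) {f' : ℝ} (hf : HasDerivAt f f' x) :
    HasDerivAt (fun y => y ^ β * f y) (β * x ^ (β - 1) * f x + x ^ β * f') x := by
  simpa using (Real.hasDerivAt_rpow_const (p := β) (Or.inl hx.ne')).fun_mul hf

theorem mul_deriv_rpow_mul (β : ℝ) (hx : 0 < x) (hf : DifferentiableAt ℝ f x) :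
    x * deriv (fun y => y ^ β * f y) x = x ^ β * (β * f x + x * deriv f x) := by
  rw [(hasDerivAt_rpow_mul β hx hf.hasDerivAt).deriv, Real.rpow_sub_one hx.ne']
  field_simp

theorem sq_mul_deriv_deriv_rpow_mul (β : ℝ) (hx : 0 < x)
    (hf : ∀ᶠ y in 𝓝 x, DifferentiableAt ℝ f y) (hf' : DifferentiableAt ℝ (deriv f) x) :
    x ^ 2 * deriv (deriv fun y => y ^ β * f y) x
      = x ^ β * (β * (β - 1) * f x + 2 * β * (x * deriv f x) + x ^ 2 * deriv (deriv f) x) := by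
  have hderiv : deriv (fun y => y ^ β * f y)
      =ᶠ[𝓝 x] fun y => β * (y ^ (β - 1) * f y) + y ^ β * deriv f y := by
    filter_upwards [hf, lt_mem_nhds hx] with y hfy hy
    rw [(hasDerivAt_rpow_mul β hy hfy.hasDerivAt).deriv]
    ring
  have h := ((hasDerivAt_rpow_mul (β - 1) hx hf.self_of_nhds.hasDerivAt).const_mul β).fun_add
    (hasDerivAt_rpow_mul β hx hf'.hasDerivAt)
  rw [hderiv.deriv_eq, h.deriv, show β - 1 - 1 = β - 2 by ring, Real.rpow_sub hx,
    Real.rpow_sub_one hx.ne', Real.rpow_two]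
  field_simp
  ring

end RpowConjugation

/-- for β > 0 and x ∈ (0,1), the block `k_β` satisfies the
SL(2,ℝ) Casimir differential equation
`(1−x)·x²·k_β''(x) − x²·k_β'(x) = β(β−1)·k_β(x)`. -/
theorem collinear_casimir_eq (β : ℝ) (hβ : 0 < β) (x : ℝ) (hx : x ∈ Set.Ioo (0 : ℝ) 1) :
    (1 - x) * x ^ 2 * deriv (deriv (kblock β)) x - x ^ 2 * deriv (kblock β) x
      = β * (β - 1) * kblock β x := by
  obtain ⟨hx0, hx1⟩ := hx
  set F : ℝ → ℝ := ₂F₁ β β (2 * β)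
  have hk : kblock β = fun y => y ^ β * F y := by
    funext y
    rw [kblock, F21_eq_ordinaryHypergeometric]
  have habc : ∀ k : ℕ, (k : ℝ) ≠ -β ∧ (k : ℝ) ≠ -β ∧ (k : ℝ) ≠ -(2 * β) := fun k => by
    have hk0 : (0 : ℝ) ≤ k := k.cast_nonneg
    refine ⟨?_, ?_, ?_⟩ <;> intro h <;> linarith
  have hnorm : ‖x‖ < 1 := by rwa [Real.norm_of_nonneg hx0.le]
  have hFx : AnalyticAt ℝ F x := analyticAt_ordinaryHypergeometric habc hnorm
  have hode := ordinaryHypergeometric_euler_ode habc hnorm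
  have h1 := mul_deriv_rpow_mul β hx0 hFx.differentiableAt
  have h2 := sq_mul_deriv_deriv_rpow_mul β hx0
    (hFx.eventually_analyticAt.mono fun _ hy => hy.differentiableAt) hFx.deriv.differentiableAt
  rw [hk]
  linear_combination (1 - x) * h2 - x * h1 + x ^ β * hode
end

section
/- For every x ∈ (0,1), the sum of SL(2,ℝ) blocks over even spins ℓ ≥ 2 with unit coefficient function evaluates in closed form: ∑_{ℓ = 2,4,6,…} (Γ(ℓ+1)²/Γ(2ℓ+1)) · 2 · k_{ℓ+1}(x) = 1/(1−x) + x − 1 + 2·log(1−x). -/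
open Real

/-!
Write ℓ = 2n + 2. The ℓ-th summand is the power series `∑ₖ c(ℓ,k) x^(ℓ+1+k)` with
`c(ℓ,k) = 2(2ℓ+1) ((ℓ+k)!)² / ((2ℓ+1+k)! k!)`, and these coefficients telescope along
the diagonals `ℓ + k = const`: with `A(ℓ,k) = C(2ℓ+2k-1, k) / C(2ℓ+2k-1, ℓ+k)` one has
`c(ℓ,k+2) = A(ℓ,k+2) - A(ℓ+2,k)` and `c(ℓ,k) = A(ℓ,k)` for `k < 2`. So the ℓ-th summand
is `S(ℓ) - S(ℓ+2)` with `S(ℓ) = ∑ₖ A(ℓ,k) x^(ℓ+1+k)`; as `0 ≤ A ≤ 2`, the `S(ℓ)` are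
summable and the sum over ℓ telescopes to `S(2)`. Finally `A(2,k) = 1 - 2/(k+3)`, so
`S(2)` is a geometric series minus twice a tail of the series of `-log (1 - x)`.
-/

open Nat

lemma poch_natCast_add_one (a b : ℕ) : poch (a + 1) b = (a + b)! / a ! := by
  rw [eq_div_iff (by positivity), poch, ← Nat.cast_add_one, ← ascPochhammer_eval_cast,
    ascPochhammer_nat_eq_ascFactorial, ← Nat.factorial_mul_ascFactorial]
  push_cast
  ring

lemma factorial_add_sq_le (ℓ k : ℕ) : (ℓ + k)! ^ 2 ≤ (2 * ℓ + k)! * k ! := by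
  calc (ℓ + k)! ^ 2 = (k + ℓ).choose ℓ * k ! * ℓ ! * (ℓ + k)! := by
        rw [Nat.add_choose_mul_factorial_mul_factorial, add_comm k]; ring
    _ ≤ (ℓ + k + ℓ).choose ℓ * k ! * ℓ ! * (ℓ + k)! := by gcongr; omega
    _ = (ℓ + k + ℓ).choose ℓ * (ℓ + k)! * ℓ ! * k ! := by ring
    _ = (2 * ℓ + k)! * k ! := by
        rw [Nat.add_choose_mul_factorial_mul_factorial, show ℓ + k + ℓ = 2 * ℓ + k by ring]

lemma Summable.hasSum_sub_succ {G : Type*} [AddCommGroup G] [TopologicalSpace G]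
    [IsTopologicalAddGroup G] {f : ℕ → G} (hf : Summable f) :
    HasSum (fun n ↦ f n - f (n + 1)) (f 0) := by
  convert hf.hasSum.sub ((hasSum_nat_add_iff' 1).mpr hf.hasSum) using 1
  simp

noncomputable def blockCoeff (ℓ k : ℕ) : ℝ :=
  2 * (2 * ℓ + 1) * ((ℓ + k)! : ℝ) ^ 2 / ((2 * ℓ + 1 + k)! * k !)

lemma gamma_sq_div_mul_kblock (ℓ : ℕ) (x : ℝ) :
    Gamma (ℓ + 1) ^ 2 / Gamma (2 * ℓ + 1) * (2 * kblock (ℓ + 1) x)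
      = ∑' k, blockCoeff ℓ k * x ^ (ℓ + 1 + k) := by
  have h2ℓ : (2 * ℓ : ℝ) = (2 * ℓ : ℕ) := by push_cast; ring
  have h2ℓ1 : 2 * ((ℓ : ℝ) + 1) = (2 * ℓ + 1 : ℕ) + 1 := by push_cast; ring
  rw [kblock, F21, h2ℓ, h2ℓ1, Gamma_nat_eq_factorial, Gamma_nat_eq_factorial]
  simp_rw [poch_natCast_add_one]
  rw [← Nat.cast_add_one, rpow_natCast]
  simp_rw [← tsum_mul_left]
  refine tsum_congr fun k ↦ ?_
  rw [blockCoeff, Nat.factorial_succ (2 * ℓ)]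
  have : (2 * ℓ + 1 + k)! ≠ 0 := Nat.factorial_ne_zero _
  field_simp
  push_cast
  ring

noncomputable def blockPotential (ℓ k : ℕ) : ℝ :=
  (2 * ℓ + k) * ((ℓ + k)! : ℝ) ^ 2 / ((ℓ + k) * (2 * ℓ + k)! * k !)

lemma blockCoeff_zero {ℓ : ℕ} (hℓ : ℓ ≠ 0) : blockCoeff ℓ 0 = blockPotential ℓ 0 := by
  simp only [blockCoeff, blockPotential, add_zero]
  rw [Nat.factorial_succ]
  have : (ℓ : ℝ) ≠ 0 := by exact_mod_cast hℓ
  field_simp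
  push_cast
  ring

lemma blockCoeff_one (ℓ : ℕ) : blockCoeff ℓ 1 = blockPotential ℓ 1 := by
  rw [blockCoeff, blockPotential, show 2 * ℓ + 1 + 1 = (2 * ℓ + 1) + 1 by ring,
    Nat.factorial_succ (2 * ℓ + 1)]
  field_simp
  push_cast
  ring

lemma blockCoeff_add_two (ℓ k : ℕ) :
    blockCoeff ℓ (k + 2) = blockPotential ℓ (k + 2) - blockPotential (ℓ + 2) k := by
  rw [blockCoeff, blockPotential, blockPotential,
    show 2 * (ℓ + 2) + k = (2 * ℓ + k + 2) + 1 + 1 by ring,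
    show 2 * ℓ + 1 + (k + 2) = (2 * ℓ + k + 2) + 1 by ring,
    show ℓ + 2 + k = ℓ + (k + 2) by ring, show 2 * ℓ + (k + 2) = 2 * ℓ + k + 2 by ring,
    Nat.factorial_succ (2 * ℓ + k + 2 + 1), Nat.factorial_succ (2 * ℓ + k + 2),
    Nat.factorial_succ (k + 1), Nat.factorial_succ k]
  field_simp
  push_cast
  ring

lemma blockPotential_nonneg (ℓ k : ℕ) : 0 ≤ blockPotential ℓ k := by
  unfold blockPotential; positivity

lemma blockPotential_le_two (ℓ k : ℕ) : blockPotential ℓ k ≤ 2 := by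
  rcases Nat.eq_zero_or_pos (ℓ + k) with h | h
  · obtain ⟨rfl, rfl⟩ : ℓ = 0 ∧ k = 0 := by omega
    norm_num [blockPotential]
  have hfac : ((ℓ + k)! : ℝ) ^ 2 ≤ (2 * ℓ + k)! * k ! := by
    exact_mod_cast factorial_add_sq_le ℓ k
  have hpos : (0 : ℝ) < ℓ + k := by exact_mod_cast h
  rw [blockPotential, div_le_iff₀ (by positivity)]
  calc (2 * ℓ + k : ℝ) * (ℓ + k)! ^ 2 ≤ (2 * (ℓ + k)) * ((2 * ℓ + k)! * k !) := by
        gcongr; linarith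
    _ = 2 * ((ℓ + k) * (2 * ℓ + k)! * k !) := by ring

lemma norm_blockPotential_mul_pow_le (ℓ k : ℕ) (x : ℝ) :
    ‖blockPotential ℓ k * x ^ (ℓ + 1 + k)‖ ≤ 2 * |x| ^ (ℓ + 1) * |x| ^ k := by
  rw [norm_mul, Real.norm_eq_abs, Real.norm_eq_abs, abs_of_nonneg (blockPotential_nonneg ℓ k),
    abs_pow, pow_add, ← mul_assoc]
  gcongr
  exact blockPotential_le_two ℓ k

noncomputable def blockPotentialSum (ℓ : ℕ) (x : ℝ) : ℝ :=
  ∑' k, blockPotential ℓ k * x ^ (ℓ + 1 + k)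

lemma summable_blockPotential_mul_pow (ℓ : ℕ) {x : ℝ} (hx : |x| < 1) :
    Summable fun k ↦ blockPotential ℓ k * x ^ (ℓ + 1 + k) :=
  .of_norm_bounded ((summable_geometric_of_lt_one (abs_nonneg x) hx).mul_left _)
    (norm_blockPotential_mul_pow_le ℓ · x)

lemma abs_blockPotentialSum_le (ℓ : ℕ) {x : ℝ} (hx : |x| < 1) :
    |blockPotentialSum ℓ x| ≤ 2 * |x| ^ (ℓ + 1) * (1 - |x|)⁻¹ :=
  tsum_of_norm_bounded ((hasSum_geometric_of_lt_one (abs_nonneg x) hx).mul_left _)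
    (norm_blockPotential_mul_pow_le ℓ · x)

lemma summable_blockPotentialSum {x : ℝ} (hx : |x| < 1) :
    Summable fun ℓ ↦ blockPotentialSum ℓ x :=
  .of_norm_bounded
    ((summable_geometric_of_lt_one (abs_nonneg x) hx).mul_left (2 * |x| * (1 - |x|)⁻¹))
    fun ℓ ↦ (abs_blockPotentialSum_le ℓ hx).trans_eq (by ring)

lemma hasSum_blockCoeff_mul_pow {ℓ : ℕ} (hℓ : ℓ ≠ 0) {x : ℝ} (hx : |x| < 1) :
    HasSum (fun k ↦ blockCoeff ℓ k * x ^ (ℓ + 1 + k))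
      (blockPotentialSum ℓ x - blockPotentialSum (ℓ + 2) x) := by
  have hA := (summable_blockPotential_mul_pow ℓ hx).hasSum
  have hA₂ := (summable_blockPotential_mul_pow (ℓ + 2) hx).hasSum
  rw [← hasSum_nat_add_iff' 2] at hA ⊢
  convert hA.sub hA₂ using 1
  · funext k
    rw [blockCoeff_add_two, sub_mul, show ℓ + 2 + 1 + k = ℓ + 1 + (k + 2) by ring]
  · simp only [blockPotentialSum, Finset.sum_range_succ, Finset.range_one, Finset.sum_singleton,
      blockCoeff_zero hℓ, add_zero, blockCoeff_one]
    ring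

lemma blockPotential_two (k : ℕ) : blockPotential 2 k = (k + 1) / (k + 3) := by
  rw [blockPotential, show 2 * 2 + k = (k + 3) + 1 by ring, show 2 + k = (k + 1) + 1 by ring,
    Nat.factorial_succ (k + 3), Nat.factorial_succ (k + 2), Nat.factorial_succ (k + 1),
    Nat.factorial_succ k]
  field_simp
  push_cast
  ring

lemma blockPotentialSum_two {x : ℝ} (hx : |x| < 1) :
    blockPotentialSum 2 x = 1 / (1 - x) + x - 1 + 2 * log (1 - x) := by
  have hgeom : HasSum (fun k : ℕ ↦ x ^ (k + 3)) (x ^ 3 * (1 - x)⁻¹) := by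
    simpa [pow_add, mul_comm] using (hasSum_geometric_of_abs_lt_one hx).mul_left (x ^ 3)
  have hlog : HasSum (fun k : ℕ ↦ x ^ (k + 3) / (k + 3)) (-log (1 - x) - x - x ^ 2 / 2) := by
    have h := (hasSum_nat_add_iff' 2).mpr (hasSum_pow_div_log_of_abs_lt_one hx)
    norm_num [Finset.sum_range_succ, add_assoc] at h
    rwa [sub_sub]
  have hx1 : 1 - x ≠ 0 := by linarith [(abs_lt.1 hx).2]
  calc blockPotentialSum 2 x = ∑' k : ℕ, (x ^ (k + 3) - 2 * (x ^ (k + 3) / (k + 3))) := by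
        refine tsum_congr fun k ↦ ?_
        rw [blockPotential_two, show 2 + 1 + k = k + 3 by ring]
        field_simp
        ring
    _ = x ^ 3 * (1 - x)⁻¹ - 2 * (-log (1 - x) - x - x ^ 2 / 2) :=
        (hgeom.sub (hlog.mul_left 2)).tsum_eq
    _ = 1 / (1 - x) + x - 1 + 2 * log (1 - x) := by
        field_simp
        ring

/-- for x ∈ (0,1), summing SL(2,ℝ) blocks over even spins
ℓ = 2,4,6,… (here ℓ = 2(n+1)) with unit coefficient function gives
`∑ (Γ(ℓ+1)²/Γ(2ℓ+1))·2·k_{ℓ+1}(x) = 1/(1−x) + x − 1 + 2 log(1−x)`. -/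
theorem sum_blocks_unit (x : ℝ) (hx : x ∈ Set.Ioo (0 : ℝ) 1) :
    ∑' n : ℕ,
        (Real.Gamma ((2 * (n : ℝ) + 2) + 1)) ^ 2 / Real.Gamma (2 * (2 * (n : ℝ) + 2) + 1)
          * (2 * kblock ((2 * (n : ℝ) + 2) + 1) x)
      = 1 / (1 - x) + x - 1 + 2 * Real.log (1 - x) := by
  have hx' : |x| < 1 := abs_lt.2 ⟨by linarith [hx.1], hx.2⟩
  have hblock (n : ℕ) :
      Gamma ((2 * (n : ℝ) + 2) + 1) ^ 2 / Gamma (2 * (2 * (n : ℝ) + 2) + 1)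
          * (2 * kblock ((2 * (n : ℝ) + 2) + 1) x)
        = blockPotentialSum (2 * n + 2) x - blockPotentialSum (2 * (n + 1) + 2) x := by
    rw [show 2 * (n : ℝ) + 2 = (2 * n + 2 : ℕ) by push_cast; ring, gamma_sq_div_mul_kblock,
      (hasSum_blockCoeff_mul_pow (by omega) hx').tsum_eq, mul_add_one]
  rw [tsum_congr hblock, ← blockPotentialSum_two hx']
  exact ((summable_blockPotentialSum hx').comp_injective
    fun a b h ↦ by omega).hasSum_sub_succ.tsum_eq
end

section
/- Inversion of a general power: for all reals h̄ > 0, p > −1 and q < h̄ − 1, ∫₀¹ x^{h̄−q−2} · (1−x)^p · ₂F₁(h̄,h̄;2h̄;x) dx = (Γ(1+p)·Γ(h̄−q−1)/Γ(h̄+p−q)) · ₃F₂(h̄, h̄, h̄−q−1; 2h̄, h̄+p−q; 1), where ₃F₂(a₁,a₂,a₃;b₁,b₂;1) := ∑_{n=0}^∞ (a₁)_n (a₂)_n (a₃)_n / ((b₁)_n (b₂)_n n!), this series being convergent since p + 1 > 0. -/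
open Real

/-- Generalized hypergeometric series `₃F₂(a₁,a₂,a₃;b₁,b₂;1)`. -/
noncomputable def F32one (a₁ a₂ a₃ b₁ b₂ : ℝ) : ℝ :=
  ∑' n : ℕ, poch a₁ n * poch a₂ n * poch a₃ n / (poch b₁ n * poch b₂ n * (n.factorial : ℝ))

open MeasureTheory Set Filter
open scoped Nat

/-!
Expanding `₂F₁` termwise, the `n`-th term integrates to the Beta integral
`B(s + n, b) = B(s, b) (s)_n / (s + b)_n`, which produces the `₃F₂` series. All terms are
nonnegative, so the interchange of sum and integral only needs the resulting series to converge: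
by log-convexity of `Γ`, `(a)_n² / ((2a)_n n!) = O(1/n)` and `(s)_n / (s + b)_n = O(n^{-b})`.
-/

lemma poch_pos {a : ℝ} (ha : 0 < a) (n : ℕ) : 0 < poch a n := ascPochhammer_pos n a ha

lemma Gamma_add_nat_eq_Gamma_mul_poch {a : ℝ} (ha : ∀ k : ℕ, a + k ≠ 0) (n : ℕ) :
    Gamma (a + n) = Gamma a * poch a n := by
  induction n with
  | zero => simp [poch]
  | succ n ih =>
    rw [Nat.cast_succ, ← add_assoc, Gamma_add_one (ha n), ih]
    simp only [poch, ascPochhammer_succ_right, Polynomial.eval_mul, Polynomial.eval_add,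
      Polynomial.eval_X, Polynomial.eval_natCast]
    ring

lemma poch_eq_Gamma_div {a : ℝ} (ha : 0 < a) (n : ℕ) : poch a n = Gamma (a + n) / Gamma a := by
  rw [Gamma_add_nat_eq_Gamma_mul_poch (fun k => by positivity),
    mul_div_cancel_left₀ _ (Gamma_pos_of_pos ha).ne']

lemma Gamma_mul_rpow_le_Gamma_add {y u : ℝ} (hy : 1 < y) (hu : 0 < u) :
    Gamma y * (y - 1) ^ u ≤ Gamma (y + u) := by
  -- the slope of `log ∘ Γ` over `[y - 1, y]` is `log (y - 1)`, and convexity bounds it by the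
  -- slope over `[y, y + u]`
  have hslope := convexOn_log_Gamma.slope_mono_adjacent (x := y - 1) (y := y) (z := y + u)
    (mem_Ioi.2 (by linarith)) (mem_Ioi.2 (by linarith)) (by linarith) (by linarith)
  have hrec : Gamma y = (y - 1) * Gamma (y - 1) := by
    simpa using Gamma_add_one (s := y - 1) (by linarith)
  have hpos := Gamma_pos_of_pos (by linarith : 0 < y - 1)
  simp only [Function.comp_apply, sub_sub_cancel, div_one, add_sub_cancel_left, hrec] at hslope
  rw [log_mul (by linarith) hpos.ne', le_div_iff₀ hu] at hslope
  rw [← log_le_log_iff (by positivity) (Gamma_pos_of_pos (by linarith)),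
    log_mul (by positivity) (by positivity), log_rpow (by linarith), hrec,
    log_mul (by linarith) hpos.ne']
  linarith

lemma sq_Gamma_add_div_two_le {x y : ℝ} (hx : 0 < x) (hy : 0 < y) :
    Gamma ((x + y) / 2) ^ 2 ≤ Gamma x * Gamma y := by
  have h := Gamma_mul_add_mul_le_rpow_Gamma_mul_rpow_Gamma hx hy (a := 1 / 2) (b := 1 / 2)
    (by norm_num) (by norm_num) (by norm_num)
  calc Gamma ((x + y) / 2) ^ 2 = Gamma (1 / 2 * x + 1 / 2 * y) ^ 2 := by ring_nf
    _ ≤ (Gamma x ^ (1 / 2 : ℝ) * Gamma y ^ (1 / 2 : ℝ)) ^ 2 :=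
      pow_le_pow_left₀ (Gamma_pos_of_pos (by positivity)).le h 2
    _ = Gamma x * Gamma y := by
      rw [mul_pow, ← rpow_mul_natCast (Gamma_pos_of_pos hx).le,
        ← rpow_mul_natCast (Gamma_pos_of_pos hy).le]
      norm_num

lemma poch_mul_poch_div_le {a : ℝ} (ha : 0 < a) {n : ℕ} (hn : n ≠ 0) :
    poch a n * poch a n / (poch (2 * a) n * n !) ≤ Gamma (2 * a) / Gamma a ^ 2 / n := by
  have hn' : (0 : ℝ) < n := by positivity
  have hmid : Gamma (a + n) ^ 2 ≤ Gamma n * Gamma (2 * a + n) := by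
    have := sq_Gamma_add_div_two_le hn' (by positivity : 0 < 2 * a + n)
    rwa [show ((n : ℝ) + (2 * a + n)) / 2 = a + n by ring] at this
  have hfact : (n ! : ℝ) = n * Gamma n := by
    rw [← Gamma_nat_eq_factorial, Gamma_add_one hn'.ne']
  rw [poch_eq_Gamma_div ha, poch_eq_Gamma_div (by positivity), hfact,
    div_le_div_iff₀ (by positivity) hn']
  field_simp
  rw [mul_comm a 2, mul_comm _ (Gamma n)]
  exact hmid

lemma poch_div_poch_add_le {a u : ℝ} (ha : 0 < a) (hu : 0 < u) {n : ℕ} (hn : 1 < a + n) :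
    poch a n / poch (a + u) n ≤ Gamma (a + u) / Gamma a * (a + n - 1) ^ (-u) := by
  have h := Gamma_mul_rpow_le_Gamma_add hn hu
  rw [poch_eq_Gamma_div ha, poch_eq_Gamma_div (by positivity), rpow_neg (by linarith),
    add_right_comm]
  field_simp
  rwa [le_div_iff₀ (rpow_pos_of_pos (by linarith) u)]

lemma summable_F32one_term {a s u : ℝ} (ha : 0 < a) (hs : 0 < s) (hu : 0 < u) :
    Summable fun n : ℕ ↦
      poch a n * poch a n * poch s n / (poch (2 * a) n * poch (s + u) n * n !) := by
  set K := Gamma (2 * a) / Gamma a ^ 2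
  set L := Gamma (s + u) / Gamma s
  have hL : 0 ≤ L := by positivity
  refine Summable.of_norm_bounded_eventually
    ((summable_nat_rpow.2 (by linarith : -(1 + u) < -1)).mul_left (K * L * 2 ^ u)) ?_
  rw [Nat.cofinite_eq_atTop]
  filter_upwards [eventually_ge_atTop 2] with n hn
  have hn' : (2 : ℝ) ≤ n := by exact_mod_cast hn
  have := poch_pos ha n
  have := poch_pos (by positivity : 0 < 2 * a) n
  have := poch_pos hs n
  have := poch_pos (by positivity : 0 < s + u) n
  rw [norm_of_nonneg (by positivity)]
  calc poch a n * poch a n * poch s n / (poch (2 * a) n * poch (s + u) n * n !)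
      = poch a n * poch a n / (poch (2 * a) n * n !) * (poch s n / poch (s + u) n) := by
        field_simp
    _ ≤ K / n * (L * (n / 2) ^ (-u)) := by
        refine mul_le_mul (poch_mul_poch_div_le ha (by omega)) ?_ (by positivity) (by positivity)
        refine (poch_div_poch_add_le hs hu (by linarith)).trans ?_
        exact mul_le_mul_of_nonneg_left
          (rpow_le_rpow_of_nonpos (by positivity) (by linarith) (by linarith)) hL
    _ = K * L * 2 ^ u * (n : ℝ) ^ (-(1 + u)) := by
        rw [div_rpow (by positivity) zero_le_two, rpow_neg zero_le_two, rpow_neg (by positivity),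
          rpow_neg (by positivity), rpow_add (by positivity), rpow_one]
        field_simp

lemma ofReal_rpow_mul_one_sub_rpow {a b x : ℝ} (hx : x ∈ Icc (0 : ℝ) 1) :
    ((x ^ (a - 1) * (1 - x) ^ (b - 1) : ℝ) : ℂ)
      = (x : ℂ) ^ ((a : ℂ) - 1) * (1 - (x : ℂ)) ^ ((b : ℂ) - 1) := by
  rw [Complex.ofReal_mul, Complex.ofReal_cpow hx.1, Complex.ofReal_cpow (sub_nonneg.2 hx.2)]
  push_cast
  rfl

lemma intervalIntegrable_rpow_mul_one_sub_rpow {a b : ℝ} (ha : 0 < a) (hb : 0 < b) :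
    IntervalIntegrable (fun x : ℝ ↦ x ^ (a - 1) * (1 - x) ^ (b - 1)) volume 0 1 := by
  have h := Complex.betaIntegral_convergent (u := a) (v := b) (by simpa) (by simpa)
  rw [intervalIntegrable_iff_integrableOn_Ioc_of_le zero_le_one] at h ⊢
  refine IntegrableOn.congr_fun (Integrable.re h) (fun x hx ↦ ?_) measurableSet_Ioc
  rw [← ofReal_rpow_mul_one_sub_rpow (Ioc_subset_Icc_self hx)]
  exact Complex.ofReal_re _

lemma integral_rpow_mul_one_sub_rpow {a b : ℝ} (ha : 0 < a) (hb : 0 < b) :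
    ∫ x in (0 : ℝ)..1, x ^ (a - 1) * (1 - x) ^ (b - 1) = Gamma a * Gamma b / Gamma (a + b) := by
  apply Complex.ofReal_injective
  rw [← intervalIntegral.integral_ofReal, intervalIntegral.integral_congr
    (g := fun x : ℝ ↦ (x : ℂ) ^ ((a : ℂ) - 1) * (1 - (x : ℂ)) ^ ((b : ℂ) - 1))
    (fun x hx ↦ ofReal_rpow_mul_one_sub_rpow (by rwa [uIcc_of_le zero_le_one] at hx)),
    ← Complex.betaIntegral, Complex.betaIntegral_eq_Gamma_mul_div _ _ (by simpa) (by simpa)]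
  push_cast [← Complex.Gamma_ofReal]
  rfl

lemma integral_rpow_add_nat_mul_one_sub_rpow {a b : ℝ} (ha : 0 < a) (hb : 0 < b) (n : ℕ) :
    ∫ x in (0 : ℝ)..1, x ^ (a + n - 1) * (1 - x) ^ (b - 1)
      = Gamma a * Gamma b / Gamma (a + b) * (poch a n / poch (a + b) n) := by
  rw [integral_rpow_mul_one_sub_rpow (by positivity) hb, add_right_comm,
    Gamma_add_nat_eq_Gamma_mul_poch (fun k ↦ by positivity),
    Gamma_add_nat_eq_Gamma_mul_poch (fun k ↦ by positivity)]
  field_simp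

lemma rpow_mul_one_sub_rpow_mul_F21 {x : ℝ} (hx : 0 < x) (s b α β γ : ℝ) :
    x ^ (s - 1) * (1 - x) ^ b * F21 α β γ x
      = ∑' n : ℕ, poch α n * poch β n / (poch γ n * n !) * (x ^ (s + n - 1) * (1 - x) ^ b) := by
  rw [F21, ← tsum_mul_left]
  congr 1 with n
  rw [show s + n - 1 = (s - 1) + n by ring, rpow_add hx, rpow_natCast]
  ring

theorem integral_rpow_mul_one_sub_rpow_mul_F21 {a s b : ℝ} (ha : 0 < a) (hs : 0 < s)
    (hb : 0 < b) :
    ∫ x in (0 : ℝ)..1, x ^ (s - 1) * (1 - x) ^ (b - 1) * F21 a a (2 * a) x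
      = Gamma s * Gamma b / Gamma (s + b) * F32one a a s (2 * a) (s + b) := by
  set c : ℕ → ℝ := fun n ↦ poch a n * poch a n / (poch (2 * a) n * n !)
  set f : ℕ → ℝ → ℝ := fun n x ↦ c n * (x ^ (s + n - 1) * (1 - x) ^ (b - 1))
  have hc : ∀ n, 0 ≤ c n := fun n ↦ by
    have := poch_pos ha n; have := poch_pos (by positivity : 0 < 2 * a) n; positivity
  have hf_int : ∀ n, IntegrableOn (f n) (Ioc 0 1) := fun n ↦
    ((intervalIntegrable_iff_integrableOn_Ioc_of_le zero_le_one).1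
      (intervalIntegrable_rpow_mul_one_sub_rpow (by positivity) hb)).const_mul (c n)
  have hf_integral : ∀ n, ∫ x in Ioc 0 1, f n x = Gamma s * Gamma b / Gamma (s + b) *
      (poch a n * poch a n * poch s n / (poch (2 * a) n * poch (s + b) n * n !)) := fun n ↦ by
    rw [integral_const_mul, ← intervalIntegral.integral_of_le zero_le_one,
      integral_rpow_add_nat_mul_one_sub_rpow hs hb]
    ring
  have hf_norm : ∀ n, ∫ x in Ioc 0 1, ‖f n x‖ = ∫ x in Ioc 0 1, f n x := fun n ↦
    setIntegral_congr_fun measurableSet_Ioc fun x hx ↦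
      norm_of_nonneg <| mul_nonneg (hc n) <|
        mul_nonneg (rpow_nonneg hx.1.le _) (rpow_nonneg (sub_nonneg.2 hx.2) _)
  have hf_summable : Summable fun n ↦ ∫ x in Ioc 0 1, ‖f n x‖ := by
    simp_rw [hf_norm, hf_integral]
    exact (summable_F32one_term ha hs hb).mul_left _
  rw [intervalIntegral.integral_of_le zero_le_one,
    setIntegral_congr_fun measurableSet_Ioc fun x hx ↦ rpow_mul_one_sub_rpow_mul_F21 hx.1 _ _ _ _ _,
    ← integral_tsum_of_summable_integral_norm hf_int hf_summable, tsum_congr hf_integral,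
    tsum_mul_left, F32one]

/-- inversion of a general power.  For h̄ > 0, p > −1, q < h̄ − 1:
`∫₀¹ x^{h̄−q−2}(1−x)^p ₂F₁(h̄,h̄;2h̄;x) dx
  = (Γ(1+p)Γ(h̄−q−1)/Γ(h̄+p−q))·₃F₂(h̄,h̄,h̄−q−1;2h̄,h̄+p−q;1)`. -/
theorem inversion_general_power (hb p q : ℝ) (hhb : 0 < hb) (hp : -1 < p)
    (hq : q < hb - 1) :
    (∫ x in (0 : ℝ)..1, x ^ (hb - q - 2) * (1 - x) ^ p * F21 hb hb (2 * hb) x)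
      = Real.Gamma (1 + p) * Real.Gamma (hb - q - 1) / Real.Gamma (hb + p - q)
          * F32one hb hb (hb - q - 1) (2 * hb) (hb + p - q) := by
  have h := integral_rpow_mul_one_sub_rpow_mul_F21 hhb (s := hb - q - 1) (b := 1 + p)
    (by linarith) (by linarith)
  rwa [show hb - q - 1 - 1 = hb - q - 2 by ring, add_sub_cancel_left,
    show hb - q - 1 + (1 + p) = hb + p - q by ring, mul_comm (Gamma (hb - q - 1))] at h
end

section
/- Euler-type integral with a third linear factor: for all reals a > −1, b > −1, arbitrary real c, and γ ∈ (0,1), ∫₀¹ x^a (1−x)^b (1−γx)^c dx = (Γ(a+1)Γ(b+1)/Γ(a+b+2)) · ₂F₁(a+1, −c; a+b+2; γ). -/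
open Real

open MeasureTheory

lemma slit_aux {z : ℂ} (hz : z ∈ Metric.ball (0:ℂ) 1) : (1 - z) ∈ Complex.slitPlane := by
  rw [Complex.mem_slitPlane_iff]
  left
  simp only [Complex.sub_re, Complex.one_re]
  have h1 : |z.re| < 1 := lt_of_le_of_lt (Complex.abs_re_le_norm z) (by simpa using hz)
  linarith [(abs_lt.mp h1).2]

lemma hasDerivAt_one_sub_cpow {z : ℂ} (w : ℂ) (hz : z ∈ Metric.ball (0:ℂ) 1) :
    HasDerivAt (fun z : ℂ => (1 - z) ^ w) (w * (1 - z) ^ (w - 1) * (-1)) z := by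
  have h1 : HasDerivAt (fun z : ℂ => 1 - z) (-1) z := by
    simpa using (hasDerivAt_id z).const_sub 1
  exact h1.cpow_const (slit_aux hz)

lemma iteratedDeriv_one_sub_cpow (c : ℂ) :
    ∀ n : ℕ, ∀ z ∈ Metric.ball (0:ℂ) 1,
      iteratedDeriv n (fun z : ℂ => (1 - z) ^ c) z
        = (ascPochhammer ℂ n).eval (-c) * (1 - z) ^ (c - n) := by
  intro n
  induction n with
  | zero => intro z _; simp
  | succ n ih =>
    intro z hz
    rw [iteratedDeriv_succ]
    have hev : iteratedDeriv n (fun z : ℂ => (1 - z) ^ c)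
        =ᶠ[nhds z] fun w => (ascPochhammer ℂ n).eval (-c) * (1 - w) ^ (c - n) := by
      filter_upwards [Metric.isOpen_ball.mem_nhds hz] with w hw using ih w hw
    rw [hev.deriv_eq]
    have hd := (hasDerivAt_one_sub_cpow (c - n) hz).const_mul ((ascPochhammer ℂ n).eval (-c))
    rw [hd.deriv]
    have he : c - ↑n - 1 = c - ↑(n + 1) := by push_cast; ring
    rw [he, ascPochhammer_succ_right, Polynomial.eval_mul, Polynomial.eval_add,
      Polynomial.eval_X, Polynomial.eval_natCast]
    ring

lemma binomial_hasSum (c t : ℝ) (ht0 : 0 ≤ t) (ht1 : t < 1) :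
    HasSum (fun n : ℕ => poch (-c) n / n.factorial * t ^ n) ((1 - t) ^ c) := by
  have hdiff : DifferentiableOn ℂ (fun z : ℂ => (1 - z) ^ (c:ℂ)) (Metric.ball 0 1) :=
    fun z hz => (hasDerivAt_one_sub_cpow (c:ℂ) hz).differentiableAt.differentiableWithinAt
  have hz : (t:ℂ) ∈ Metric.ball (0:ℂ) 1 := by
    simp only [Metric.mem_ball, dist_zero_right, Complex.norm_real, Real.norm_eq_abs]
    rwa [abs_of_nonneg ht0]
  have H := Complex.hasSum_taylorSeries_on_ball hdiff hz
  have hterm : (fun n : ℕ => (n.factorial : ℂ)⁻¹ • ((t:ℂ) - 0) ^ n •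
      iteratedDeriv n (fun z : ℂ => (1 - z) ^ (c:ℂ)) 0)
      = fun n : ℕ => ((poch (-c) n / n.factorial * t ^ n : ℝ) : ℂ) := by
    funext n
    rw [iteratedDeriv_one_sub_cpow (c:ℂ) n 0 (by simp)]
    have h1 : ((1:ℂ) - 0) ^ ((c:ℂ) - (n:ℂ)) = 1 := by
      rw [sub_zero, Complex.one_cpow]
    have h2 : (ascPochhammer ℂ n).eval (-(c:ℂ)) = ((poch (-c) n : ℝ) : ℂ) := by
      rw [show (-(c:ℂ)) = (((-c : ℝ)):ℂ) by push_cast; ring,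
        show ((((-c : ℝ)):ℂ)) = Complex.ofRealHom (-c) from rfl,
        ascPochhammer_eval₂ Complex.ofRealHom n, Polynomial.eval₂_at_apply]
      rfl
    rw [h1, h2, smul_eq_mul, smul_eq_mul]
    push_cast
    ring
  have hval : ((1:ℂ) - (t:ℂ)) ^ (c:ℂ) = (((1 - t) ^ c : ℝ) : ℂ) := by
    rw [show ((1:ℂ) - (t:ℂ)) = (((1 - t : ℝ)):ℂ) by push_cast; ring,
      Complex.ofReal_cpow (by linarith)]
  rw [hterm, hval] at H
  exact Complex.hasSum_ofReal.mp H

lemma Gamma_add_nat {s : ℝ} (hs : 0 < s) (n : ℕ) :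
    Real.Gamma (s + n) = Real.Gamma s * poch s n := by
  induction n with
  | zero => simp [poch]
  | succ n ih =>
    have h : s + ((n:ℕ)+1 : ℕ) = (s + n) + 1 := by push_cast; ring
    have hpos : (0:ℝ) < s + n := by positivity
    rw [h, Real.Gamma_add_one hpos.ne', ih]
    unfold poch
    rw [ascPochhammer_succ_right, Polynomial.eval_mul, Polynomial.eval_add,
      Polynomial.eval_X, Polynomial.eval_natCast]
    ring

lemma betaIntegrable {u v : ℝ} (hu : 0 < u) (hv : 0 < v) :
    IntervalIntegrable (fun x : ℝ => x ^ (u - 1) * (1 - x) ^ (v - 1)) volume 0 1 := by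
  have hC := Complex.betaIntegral_convergent (u := (u:ℂ)) (v := (v:ℂ))
    (by simpa using hu) (by simpa using hv)
  rw [intervalIntegrable_iff] at hC ⊢
  refine hC.re.congr ?_
  refine Filter.eventuallyEq_of_mem (MeasureTheory.self_mem_ae_restrict measurableSet_uIoc) ?_
  intro x hx
  simp only [RCLike.re_to_complex]
  rw [Set.uIoc_of_le zero_le_one] at hx
  rw [show ((u:ℂ) - 1) = (((u - 1 : ℝ)):ℂ) by push_cast; ring,
    show ((v:ℂ) - 1) = (((v - 1 : ℝ)):ℂ) by push_cast; ring,
    show ((1:ℂ) - (x:ℂ)) = (((1 - x : ℝ)):ℂ) by push_cast; ring,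
    ← Complex.ofReal_cpow hx.1.le, ← Complex.ofReal_cpow (by linarith [hx.2]),
    ← Complex.ofReal_mul, Complex.ofReal_re]

lemma realBeta {u v : ℝ} (hu : 0 < u) (hv : 0 < v) :
    ∫ x in (0:ℝ)..1, x ^ (u - 1) * (1 - x) ^ (v - 1)
      = Real.Gamma u * Real.Gamma v / Real.Gamma (u + v) := by
  have hG := Complex.Gamma_mul_Gamma_eq_betaIntegral (s := (u:ℂ)) (t := (v:ℂ))
    (by simpa using hu) (by simpa using hv)
  have hne : Real.Gamma (u + v) ≠ 0 := (Real.Gamma_pos_of_pos (by positivity)).ne'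
  have hcast : ((∫ x in (0:ℝ)..1, x ^ (u - 1) * (1 - x) ^ (v - 1) : ℝ) : ℂ)
      = Complex.betaIntegral u v := by
    rw [← intervalIntegral.integral_ofReal]
    unfold Complex.betaIntegral
    refine intervalIntegral.integral_congr_ae ?_
    filter_upwards with x hx
    rw [Set.uIoc_of_le zero_le_one] at hx
    rw [show ((u:ℂ) - 1) = (((u - 1 : ℝ)):ℂ) by push_cast; ring,
      show ((v:ℂ) - 1) = (((v - 1 : ℝ)):ℂ) by push_cast; ring,
      show ((1:ℂ) - (x:ℂ)) = (((1 - x : ℝ)):ℂ) by push_cast; ring,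
      ← Complex.ofReal_cpow hx.1.le, ← Complex.ofReal_cpow (by linarith [hx.2]),
      ← Complex.ofReal_mul]
  have : ((Real.Gamma u * Real.Gamma v : ℝ) : ℂ)
      = ((Real.Gamma (u + v) : ℝ) : ℂ) * ((∫ x in (0:ℝ)..1, x ^ (u-1) * (1-x) ^ (v-1) : ℝ) : ℂ) := by
    rw [hcast]
    push_cast
    rw [← Complex.Gamma_ofReal, ← Complex.Gamma_ofReal, ← Complex.Gamma_ofReal]
    push_cast
    exact hG
  rw [← Complex.ofReal_mul] at this
  have h2 := Complex.ofReal_injective this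
  field_simp
  linarith [h2]


lemma poch_abs_le (c : ℝ) (n : ℕ) : |poch (-c) n| ≤ poch (|c| + 1) n := by
  induction n with
  | zero => simp [poch]
  | succ n ih =>
    unfold poch at *
    simp only [ascPochhammer_succ_right, Polynomial.eval_mul, Polynomial.eval_add,
      Polynomial.eval_X, Polynomial.eval_natCast, abs_mul]
    have h1 : |(-c) + n| ≤ |c| + 1 + n := by
      calc |(-c) + n| ≤ |(-c)| + |(n:ℝ)| := abs_add_le _ _
      _ ≤ |c| + 1 + n := by rw [abs_neg, Nat.abs_cast]; linarith
    exact mul_le_mul ih h1 (abs_nonneg _)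
      (le_of_lt (ascPochhammer_pos n _ (by positivity)))

lemma poch_ratio_summable (d γ : ℝ) (hd : 0 < d) (hγ0 : 0 < γ) (hγ1 : γ < 1) :
    Summable (fun n : ℕ => poch d n / n.factorial * γ ^ n) := by
  set g : ℕ → ℝ := fun n => poch d n / n.factorial * γ ^ n with hg
  have hpos : ∀ n, 0 < g n := by
    intro n
    have h := ascPochhammer_pos n d hd
    have h2 : (0:ℝ) < n.factorial := by positivity
    have h3 : (0:ℝ) < γ ^ n := pow_pos hγ0 n
    simp only [hg, poch]
    positivity
  refine summable_of_ratio_test_tendsto_lt_one hγ1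
    (Filter.Eventually.of_forall fun n => (hpos n).ne') ?_
  have hrec : ∀ n : ℕ, g (n+1) = g n * ((d + n) * γ / (n + 1)) := by
    intro n
    simp only [hg, poch]
    rw [ascPochhammer_succ_right, Polynomial.eval_mul, Polynomial.eval_add,
      Polynomial.eval_X, Polynomial.eval_natCast, Nat.factorial_succ]
    have h1 : ((n:ℝ) + 1) ≠ 0 := by positivity
    have h2 : ((n.factorial : ℝ)) ≠ 0 := by positivity
    push_cast
    field_simp
    ring
  have heq : ∀ n : ℕ, ‖g (n+1)‖ / ‖g n‖ = γ * ((d - 1) * (1 / ((n:ℝ) + 1)) + 1) := by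
    intro n
    have hr0 : (0:ℝ) < (d + n) * γ / (n + 1) := by positivity
    rw [hrec n, norm_mul, Real.norm_of_nonneg (hpos n).le, Real.norm_of_nonneg hr0.le,
      mul_comm (g n), mul_div_assoc, div_self (hpos n).ne', mul_one]
    have h1 : ((n:ℝ) + 1) ≠ 0 := by positivity
    field_simp
    ring
  have h0 : Filter.Tendsto (fun n : ℕ => γ * ((d - 1) * (1 / ((n:ℝ) + 1)) + 1))
      Filter.atTop (nhds (γ * ((d - 1) * 0 + 1))) :=
    (((tendsto_one_div_add_atTop_nhds_zero_nat).const_mul (d-1)).add_const 1).const_mul γ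
  simp only [mul_zero, zero_add, mul_one] at h0
  exact Filter.Tendsto.congr (fun n => (heq n).symm) h0
/-- Euler-type integral with a third linear factor.  For
a > −1, b > −1, any real c and γ ∈ (0,1):
`∫₀¹ x^a (1−x)^b (1−γx)^c dx = (Γ(a+1)Γ(b+1)/Γ(a+b+2))·₂F₁(a+1,−c;a+b+2;γ)`. -/
theorem euler_integral_third_factor (a b c γ : ℝ) (ha : -1 < a) (hb : -1 < b)
    (hγ : γ ∈ Set.Ioo (0 : ℝ) 1) :
    (∫ x in (0 : ℝ)..1, x ^ a * (1 - x) ^ b * (1 - γ * x) ^ c)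
      = Real.Gamma (a + 1) * Real.Gamma (b + 1) / Real.Gamma (a + b + 2)
          * F21 (a + 1) (-c) (a + b + 2) γ := by
  obtain ⟨hγ0, hγ1⟩ := hγ
  have ha1 : (0:ℝ) < a + 1 := by linarith
  have hb1 : (0:ℝ) < b + 1 := by linarith
  have hab : (0:ℝ) < a + b + 2 := by linarith
  have hInt : ∀ n : ℕ,
      IntegrableOn (fun x : ℝ => x ^ (a + (n:ℝ)) * (1 - x) ^ b) (Set.Ioc 0 1) volume := by
    intro n
    have h := betaIntegrable (u := a + (n:ℝ) + 1) (v := b + 1)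
      (by have := Nat.cast_nonneg (α := ℝ) n; linarith) hb1
    rw [intervalIntegrable_iff, Set.uIoc_of_le zero_le_one] at h
    simpa using h
  have hInt0 : IntegrableOn (fun x : ℝ => x ^ a * (1 - x) ^ b) (Set.Ioc 0 1) volume := by
    simpa using hInt 0
  have hval : ∀ n : ℕ, (∫ x in Set.Ioc (0:ℝ) 1, x ^ (a + (n:ℝ)) * (1 - x) ^ b)
      = Real.Gamma (a + 1 + n) * Real.Gamma (b + 1) / Real.Gamma (a + b + 2 + n) := by
    intro n
    have h := realBeta (u := a + (n:ℝ) + 1) (v := b + 1)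
      (by have := Nat.cast_nonneg (α := ℝ) n; linarith) hb1
    rw [intervalIntegral.integral_of_le zero_le_one] at h
    simp only [add_sub_cancel_right] at h
    rw [show a + 1 + (n:ℝ) = a + (n:ℝ) + 1 by ring,
      show a + b + 2 + (n:ℝ) = a + (n:ℝ) + 1 + (b + 1) by ring]
    exact h
  set F : ℕ → ℝ → ℝ :=
    fun n x => (poch (-c) n / n.factorial * γ ^ n) * (x ^ (a + (n:ℝ)) * (1 - x) ^ b) with hF
  have hFint : ∀ n, Integrable (F n) (volume.restrict (Set.Ioc 0 1)) :=
    fun n => (hInt n).const_mul _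
  set K := ∫ x in Set.Ioc (0:ℝ) 1, x ^ a * (1 - x) ^ b with hK
  have hK0 : 0 ≤ K := setIntegral_nonneg measurableSet_Ioc (fun x hx =>
    mul_nonneg (Real.rpow_nonneg hx.1.le _) (Real.rpow_nonneg (by linarith [hx.2]) _))
  have hmono : ∀ n : ℕ, (∫ x in Set.Ioc (0:ℝ) 1, x ^ (a + (n:ℝ)) * (1 - x) ^ b) ≤ K := by
    intro n
    refine setIntegral_mono_on (hInt n) hInt0 measurableSet_Ioc ?_
    intro x hx
    have h1 : x ^ (a + (n:ℝ)) ≤ x ^ a :=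
      Real.rpow_le_rpow_of_exponent_ge hx.1 hx.2 (by
        have := Nat.cast_nonneg (α := ℝ) n; linarith)
    exact mul_le_mul_of_nonneg_right h1 (Real.rpow_nonneg (by linarith [hx.2]) _)
  have hCabs : ∀ n : ℕ, |poch (-c) n / n.factorial * γ ^ n|
      = |poch (-c) n| / n.factorial * γ ^ n := by
    intro n
    rw [abs_mul, abs_div, abs_of_pos (pow_pos hγ0 n), Nat.abs_cast]
  have hnorm : ∀ n : ℕ, (∫ x in Set.Ioc (0:ℝ) 1, ‖F n x‖)
      ≤ poch (|c| + 1) n / n.factorial * γ ^ n * K := by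
    intro n
    have habs : ∀ x ∈ Set.Ioc (0:ℝ) 1, ‖F n x‖
        = |poch (-c) n / n.factorial * γ ^ n| * (x ^ (a + (n:ℝ)) * (1 - x) ^ b) := by
      intro x hx
      simp only [hF]
      rw [norm_mul, Real.norm_eq_abs, Real.norm_eq_abs,
        abs_of_nonneg (mul_nonneg (Real.rpow_nonneg hx.1.le _)
          (Real.rpow_nonneg (by linarith [hx.2]) _))]
    rw [setIntegral_congr_fun measurableSet_Ioc habs, integral_const_mul]
    calc |poch (-c) n / n.factorial * γ ^ n|
          * (∫ x in Set.Ioc (0:ℝ) 1, x ^ (a + (n:ℝ)) * (1 - x) ^ b)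
        ≤ |poch (-c) n / n.factorial * γ ^ n| * K :=
          mul_le_mul_of_nonneg_left (hmono n) (abs_nonneg _)
      _ ≤ poch (|c| + 1) n / n.factorial * γ ^ n * K := by
          refine mul_le_mul_of_nonneg_right ?_ hK0
          rw [hCabs n]
          have h1 : (0:ℝ) < n.factorial := by positivity
          have := poch_abs_le c n
          have h2 : (0:ℝ) ≤ γ ^ n := (pow_pos hγ0 n).le
          exact mul_le_mul_of_nonneg_right ((div_le_div_iff_of_pos_right h1).mpr this) h2
  have hsum : Summable (fun n : ℕ => ∫ x in Set.Ioc (0:ℝ) 1, ‖F n x‖) := by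
    refine Summable.of_nonneg_of_le
      (fun n => integral_nonneg fun x => norm_nonneg _) hnorm ?_
    exact (poch_ratio_summable (|c| + 1) γ (by positivity) hγ0 hγ1).mul_right K
  have H := MeasureTheory.hasSum_integral_of_summable_integral_norm
    (μ := volume.restrict (Set.Ioc 0 1)) hFint hsum
  have hptsum : ∀ x ∈ Set.Ioc (0:ℝ) 1,
      HasSum (fun n => F n x) (x ^ a * (1 - x) ^ b * (1 - γ * x) ^ c) := by
    intro x hx
    have ht0 : 0 ≤ γ * x := mul_nonneg hγ0.le hx.1.le
    have ht1 : γ * x < 1 := lt_of_le_of_lt (mul_le_of_le_one_right hγ0.le hx.2) hγ1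
    have hbs := (binomial_hasSum c (γ * x) ht0 ht1).mul_left (x ^ a * (1 - x) ^ b)
    have hfe : (fun n : ℕ => x ^ a * (1 - x) ^ b * (poch (-c) n / n.factorial * (γ * x) ^ n))
        = fun n => F n x := by
      funext n
      simp only [hF]
      have hx2 : x ^ (a + (n:ℝ)) = x ^ a * x ^ (n:ℕ) := by
        rw [Real.rpow_add hx.1, Real.rpow_natCast]
      rw [hx2, mul_pow]
      ring
    rwa [hfe] at hbs
  have hname : (∫ x in Set.Ioc (0:ℝ) 1, (∑' n, F n x))
      = ∫ x in (0:ℝ)..1, x ^ a * (1 - x) ^ b * (1 - γ * x) ^ c := by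
    rw [intervalIntegral.integral_of_le zero_le_one]
    exact setIntegral_congr_fun measurableSet_Ioc (fun x hx => (hptsum x hx).tsum_eq)
  rw [hname] at H
  have hterm : ∀ n : ℕ, (∫ x in Set.Ioc (0:ℝ) 1, F n x)
      = Real.Gamma (a + 1) * Real.Gamma (b + 1) / Real.Gamma (a + b + 2) *
        (poch (a + 1) n * poch (-c) n / (poch (a + b + 2) n * (n.factorial : ℝ)) * γ ^ n) := by
    intro n
    simp only [hF]
    rw [integral_const_mul, hval n, Gamma_add_nat ha1 n, Gamma_add_nat hab n]
    have h1 : (0:ℝ) < poch (a + b + 2) n := ascPochhammer_pos n _ hab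
    have h2 : (0:ℝ) < Real.Gamma (a + b + 2) := Real.Gamma_pos_of_pos hab
    have h3 : (0:ℝ) < (n.factorial : ℝ) := by positivity
    field_simp
  rw [funext hterm] at H
  rw [← H.tsum_eq, F21, tsum_mul_left]
end
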